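/- arXiv:0712.2627 — 8 statements merged into one kernel-verified Lean document; each statement's English description precedes it below -/
import Mathlib

section
/- Let Δ be the set of roots of a finite, reduced, crystallographic, irreducible root system in a finite-dimensional real vector space. If X and Y are closed symmetric subsets of Δ with X ∪ Y = Δ, then X = Δ or Y = Δ. -/
open Set

variable {ι M N : Type*}

/-- A subset `A` of the set of roots `Δ` is *closed* if whenever `α, β ∈ A` and
`α + β` is a root, `α + β ∈ A`. -/
def IsClosedSubset (Δ A : Set M) [Add M] : Prop :=
  ∀ α ∈ A, ∀ β ∈ A, α + β ∈ Δ → α + β ∈ A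

/-!
Suppose neither `X` nor `Y` is all of `Δ`. A root `α ∉ Y` and a root `β ∉ X` are orthogonal:
otherwise, after replacing `β` by `-β`, they make an obtuse angle, so `α + β` is a root, and
whichever of `X`, `Y` contains it would, being closed and symmetric, also contain `β`
(resp. `α`). Next, the roots orthogonal to every root outside `Y` form a union of irreducible
components: if such a `j` pairs nontrivially with `i ∈ Y`, pick `k ∉ Y` with `⟨i, k∨⟩ < 0`; then
`i + k` is a root outside `Y`, so `j` is orthogonal to `k` and to `i + k`, hence to `i`. This union
contains the roots outside `X` but none outside `Y`, contradicting irreducibility.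
-/

theorem IsClosedSubset.mem_of_add_mem [AddCommGroup M] {Δ A : Set M}
    (hA : IsClosedSubset Δ A) (hsymm : ∀ α ∈ A, -α ∈ A) {α β : M}
    (hα : α ∈ A) (hαβ : α + β ∈ A) (hβ : β ∈ Δ) : β ∈ A := by
  simpa using hA _ hαβ _ (hsymm α hα) (by simpa using hβ)

theorem neg_mem_compl_of_neg_mem [AddCommGroup M] {A : Set M} (hsymm : ∀ α ∈ A, -α ∈ A) :
    ∀ α ∈ Aᶜ, -α ∈ Aᶜ :=
  fun α hα hnα => hα (by simpa using hsymm _ hnα)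

namespace RootPairing

variable {R : Type*} [CommRing R] [CharZero R]
  [AddCommGroup M] [Module R M] [AddCommGroup N] [Module R N]
  (P : RootPairing ι R M N) [P.IsCrystallographic]

theorem exists_pairingIn_neg_of_pairing_ne_zero {S : Set M} (hS : ∀ α ∈ S, -α ∈ S)
    {i k : ι} (hk : P.root k ∈ S) (hik : P.pairing i k ≠ 0) :
    ∃ k', P.root k' ∈ S ∧ P.pairingIn ℤ i k' < 0 := by
  have hik' : P.pairingIn ℤ i k ≠ 0 := by
    rwa [← P.algebraMap_pairingIn ℤ, ne_eq, FaithfulSMul.algebraMap_eq_zero_iff] at hik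
  rcases hik'.lt_or_gt with hneg | hpos
  · exact ⟨k, hk, hneg⟩
  · exact ⟨P.reflectionPerm k k, by simpa using hS _ hk, by simpa using hpos⟩

variable [IsDomain R] [Finite ι] {Y : Set M}

theorem exists_root_eq_add_notMem_of_pairingIn_neg (hY : IsClosedSubset (range P.root) Y)
    (hYsymm : ∀ α ∈ Y, -α ∈ Y) {i k : ι} (hi : P.root i ∈ Y) (hk : P.root k ∉ Y)
    (hik : P.pairingIn ℤ i k < 0) :
    ∃ m, P.root m = P.root i + P.root k ∧ P.root m ∉ Y := by
  have hne : P.root i ≠ -P.root k := fun h => hk (by simpa [h] using hYsymm _ hi)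
  obtain ⟨m, hm⟩ := P.root_add_root_mem_of_pairingIn_neg hik hne
  exact ⟨m, hm, fun hmY => hk (hY.mem_of_add_mem hYsymm hi (hm ▸ hmY) (mem_range_self k))⟩

theorem pairing_eq_zero_of_notMem_of_notMem {X : Set M} (hcover : X ∪ Y = range P.root)
    (hX : IsClosedSubset (range P.root) X) (hY : IsClosedSubset (range P.root) Y)
    (hXsymm : ∀ α ∈ X, -α ∈ X) (hYsymm : ∀ α ∈ Y, -α ∈ Y)
    {i j : ι} (hi : P.root i ∉ Y) (hj : P.root j ∉ X) : P.pairing i j = 0 := by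
  have hmem : ∀ k, P.root k ∈ X ∪ Y := fun k => hcover ▸ mem_range_self k
  by_contra hij
  obtain ⟨j', hj', hneg⟩ :=
    P.exists_pairingIn_neg_of_pairing_ne_zero (neg_mem_compl_of_neg_mem hXsymm) hj hij
  obtain ⟨m, hm, hmX⟩ := P.exists_root_eq_add_notMem_of_pairingIn_neg hX hXsymm
    ((hmem i).resolve_right hi) hj' hneg
  have hmY : P.root j' + P.root i ∈ Y := add_comm (P.root i) _ ▸ hm ▸ (hmem m).resolve_left hmX
  exact hi (hY.mem_of_add_mem hYsymm ((hmem j').resolve_left hj') hmY (mem_range_self i))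

theorem forall_pairing_eq_zero_of_pairing_ne_zero (hY : IsClosedSubset (range P.root) Y)
    (hYsymm : ∀ α ∈ Y, -α ∈ Y) {i j : ι} (hj : ∀ k, P.root k ∉ Y → P.pairing j k = 0)
    (hij : P.pairing i j ≠ 0) : ∀ k, P.root k ∉ Y → P.pairing i k = 0 := by
  intro k hk
  by_contra hik
  by_cases hiY : P.root i ∈ Y
  · obtain ⟨k', hk', hneg⟩ :=
      P.exists_pairingIn_neg_of_pairing_ne_zero (neg_mem_compl_of_neg_mem hYsymm) hk hik
    obtain ⟨m, hm, hmY⟩ := P.exists_root_eq_add_notMem_of_pairingIn_neg hY hYsymm hiY hk' hneg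
    have hadd : P.pairing m j = P.pairing i j + P.pairing k' j := by
      simp only [← root_coroot_eq_pairing, hm, map_add, LinearMap.add_apply]
    rw [P.pairing_eq_zero_iff'.mp (hj m hmY), P.pairing_eq_zero_iff'.mp (hj k' hk'),
      add_zero] at hadd
    exact hij hadd.symm
  · exact hij (P.pairing_eq_zero_iff'.mp (hj i hiY))

end RootPairing

theorem closed_symmetric_cover_of_irreducible_general
    [AddCommGroup M] [Module ℝ M] [AddCommGroup N] [Module ℝ N]
    [Fintype ι]
    (P : RootPairing ι ℝ M N)
    (hcrys : P.IsCrystallographic)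
    (hirr : ∀ s : Set ι, s ≠ ∅ → s ≠ Set.univ →
      ∃ i ∈ s, ∃ j ∈ sᶜ, P.pairing i j ≠ 0)
    (X Y : Set M)
    (hXΔ : X ⊆ range P.root) (hYΔ : Y ⊆ range P.root)
    (hXclosed : IsClosedSubset (range P.root) X)
    (hYclosed : IsClosedSubset (range P.root) Y)
    (hXsymm : ∀ α ∈ X, -α ∈ X) (hYsymm : ∀ α ∈ Y, -α ∈ Y)
    (hcover : X ∪ Y = range P.root) :
    X = range P.root ∨ Y = range P.root := by
  by_contra! ⟨hX, hY⟩
  obtain ⟨_, ⟨α, rfl⟩, hαY⟩ := exists_of_ssubset (hYΔ.ssubset_of_ne hY)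
  obtain ⟨_, ⟨β, rfl⟩, hβX⟩ := exists_of_ssubset (hXΔ.ssubset_of_ne hX)
  let T : Set ι := {j | ∀ k, P.root k ∉ Y → P.pairing j k = 0}
  have hβT : β ∈ T := fun k hk => P.pairing_eq_zero_iff'.mp
    (P.pairing_eq_zero_of_notMem_of_notMem hcover hXclosed hYclosed hXsymm hYsymm hk hβX)
  have hαT : α ∉ T := fun h => two_ne_zero ((P.pairing_same α).symm.trans (h α hαY))
  obtain ⟨i, hiT, j, hjT, hij⟩ :=
    hirr T (nonempty_of_mem hβT).ne_empty (ne_univ_iff_exists_notMem T |>.mpr ⟨α, hαT⟩)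
  exact hjT (P.forall_pairing_eq_zero_of_pairing_ne_zero hYclosed hYsymm hiT
    (fun h => hij (P.pairing_eq_zero_iff'.mp h)))

/-- Let `Δ` be the set of roots of a finite, reduced, crystallographic,
irreducible root system.  If `X` and `Y` are closed symmetric subsets of `Δ` with
`X ∪ Y = Δ`, then `X = Δ` or `Y = Δ`. -/
theorem closed_symmetric_cover_of_irreducible
    [AddCommGroup M] [Module ℝ M] [AddCommGroup N] [Module ℝ N]
    [FiniteDimensional ℝ M] [Fintype ι]
    (P : RootPairing ι ℝ M N) [P.IsRootSystem]
    (hcrys : P.IsCrystallographic) (hred : P.IsReduced)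
    (hirr : ∀ s : Set ι, s ≠ ∅ → s ≠ Set.univ →
      ∃ i ∈ s, ∃ j ∈ sᶜ, P.pairing i j ≠ 0)
    (X Y : Set M)
    (hXΔ : X ⊆ range P.root) (hYΔ : Y ⊆ range P.root)
    (hXclosed : IsClosedSubset (range P.root) X)
    (hYclosed : IsClosedSubset (range P.root) Y)
    (hXsymm : ∀ α ∈ X, -α ∈ X) (hYsymm : ∀ α ∈ Y, -α ∈ Y)
    (hcover : X ∪ Y = range P.root) :
    X = range P.root ∨ Y = range P.root :=
  closed_symmetric_cover_of_irreducible_general P hcrys hirr X Y hXΔ hYΔ hXclosed hYclosed hXsymm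
    hYsymm hcover
end

section
/- Let Δ be the set of roots of a finite, reduced, crystallographic root system in a finite-dimensional real vector space V, and let σ : V → V be a linear automorphism with σ(Δ) = Δ and σ ∘ σ = id; set θ := −σ. Suppose A ⊆ Δ is a closed subset such that A ∪ σ(A) = Δ and A ∩ σ(A) ⊆ −A. Then Φ := A ∪ θ(A) is a closed subset of Δ and Φ ∪ (−Φ) = Δ (that is, Φ is a parabolic subset of roots). -/
open Set

variable {ι M N : Type*}

/-- A root system is a root pairing for which the roots span their ambient module. -/
structure RootSystem (ι R M N : Type*) [CommRing R] [AddCommGroup M] [Module R M]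
    [AddCommGroup N] [Module R N] extends RootPairing ι R M N where
  span_eq_top : Submodule.span R (range root) = ⊤

/-! Closedness of `A ∪ θ(A)` is checked summand by summand; the only nontrivial case is
`a + θ(b)` with `a, b ∈ A`. If it lies in `σ(A)`, say `a + θ(b) = σ(c)`, then `σ(a) = b + c`
lies in `A`, hence in `A ∩ σ(A)`, so `-σ(a) ∈ A`, and then `-c = b - σ(a) ∈ A`, exhibiting
`a + θ(b) = θ(-c)` as an element of `θ(A)`. -/

theorem Function.Involutive.mapsTo_of_union_image_eq {α : Type*} {f : α → α} {s t : Set α}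
    (hf : Function.Involutive f) (h : s ∪ f '' s = t) : MapsTo f t t := by
  intro v hv
  rw [← h] at hv ⊢
  rcases hv with hv | ⟨a, ha, rfl⟩
  · exact Or.inr (mem_image_of_mem f hv)
  · exact Or.inl ((hf a).symm ▸ ha)

section InvolutiveNeg

variable [InvolutiveNeg M] {Δ A : Set M} {f : M → M}

theorem union_neg_image_subset (hΔ : ∀ v ∈ Δ, -v ∈ Δ) (hf : Function.Involutive f)
    (hcover : A ∪ f '' A = Δ) : A ∪ (fun v => -f v) '' A ⊆ Δ := by
  rintro _ (ha | ⟨a, ha, rfl⟩)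
  · exact hcover ▸ Or.inl ha
  · exact hΔ _ (hf.mapsTo_of_union_image_eq hcover (hcover ▸ Or.inl ha))

theorem union_neg_image_union_neg_eq (hΔ : ∀ v ∈ Δ, -v ∈ Δ) (hf : Function.Involutive f)
    (hcover : A ∪ f '' A = Δ) :
    (A ∪ (fun v => -f v) '' A) ∪ (fun v : M => -v) '' (A ∪ (fun v => -f v) '' A) = Δ := by
  refine Subset.antisymm (union_subset (union_neg_image_subset hΔ hf hcover) ?_) ?_
  · rintro _ ⟨v, hv, rfl⟩
    exact hΔ v (union_neg_image_subset hΔ hf hcover hv)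
  · rw [← hcover]
    rintro _ (ha | ⟨a, ha, rfl⟩)
    · exact Or.inl (Or.inl ha)
    · exact Or.inr ⟨-f a, Or.inr ⟨a, ha, rfl⟩, neg_neg _⟩

end InvolutiveNeg

namespace IsClosedSubset

variable {F : Type*} [AddCommGroup M] [FunLike F M M] [AddMonoidHomClass F M M]
  {Δ A : Set M} {σ : F}

theorem add_neg_map_mem (hA : IsClosedSubset Δ A) (hΔ : ∀ v ∈ Δ, -v ∈ Δ)
    (hσ : Function.Involutive σ) (hcover : A ∪ σ '' A = Δ)
    (hcap : ∀ v ∈ A ∩ σ '' A, -v ∈ A) {a b : M} (ha : a ∈ A) (hb : b ∈ A)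
    (hab : a + -σ b ∈ Δ) : a + -σ b ∈ A ∪ (fun v => -σ v) '' A := by
  rcases hcover ▸ hab with h | ⟨c, hc, hcab⟩
  · exact Or.inl h
  have hσa : σ a = b + c := by
    have hc' := congrArg σ hcab
    rw [hσ, map_add, map_neg, hσ] at hc'
    rw [hc']
    abel
  have hσaA : σ a ∈ A :=
    hσa ▸ hA b hb c hc (hσa ▸ hσ.mapsTo_of_union_image_eq hcover (hcover ▸ Or.inl ha))
  have hnσaA : -σ a ∈ A := hcap _ ⟨hσaA, a, ha, rfl⟩
  have hnc : -c = b + -σ a := by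
    rw [hσa]
    abel
  have hncA : -c ∈ A := hnc ▸ hA b hb _ hnσaA (hnc ▸ hΔ c (hcover ▸ Or.inl hc))
  exact Or.inr ⟨-c, hncA, by simp only [map_neg, neg_neg, hcab]⟩

theorem union_neg_map_image (hA : IsClosedSubset Δ A) (hΔ : ∀ v ∈ Δ, -v ∈ Δ)
    (hσ : Function.Involutive σ) (hcover : A ∪ σ '' A = Δ)
    (hcap : ∀ v ∈ A ∩ σ '' A, -v ∈ A) :
    IsClosedSubset Δ (A ∪ (fun v => -σ v) '' A) := by
  rintro _ (ha | ⟨a, ha, rfl⟩) _ (hb | ⟨b, hb, rfl⟩) hsum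
  · exact Or.inl (hA _ ha _ hb hsum)
  · exact hA.add_neg_map_mem hΔ hσ hcover hcap ha hb hsum
  · rw [add_comm] at hsum ⊢
    exact hA.add_neg_map_mem hΔ hσ hcover hcap hb ha hsum
  · have hab : -σ (a + b) = -σ a + -σ b := by rw [map_add, neg_add]
    have habΔ : a + b ∈ Δ := by
      have h := hΔ _ (hσ.mapsTo_of_union_image_eq hcover (hab ▸ hsum : -σ (a + b) ∈ Δ))
      rwa [map_neg, hσ, neg_neg] at h
    exact Or.inr ⟨a + b, hA a ha b hb habΔ, hab⟩

end IsClosedSubset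

theorem closed_union_theta_is_parabolic_general
    [AddCommGroup M] [Module ℝ M] [AddCommGroup N] [Module ℝ N]
    (P : RootSystem ι ℝ M N)
    (σ : M ≃ₗ[ℝ] M)
    (hσinv : ∀ v : M, σ (σ v) = v)
    (A : Set M)
    (hAclosed : IsClosedSubset (range P.root) A)
    (hcover : A ∪ σ '' A = range P.root)
    (hcap : ∀ v ∈ A ∩ σ '' A, -v ∈ A) :
    IsClosedSubset (range P.root) (A ∪ (fun v => -(σ v)) '' A) ∧
      (A ∪ (fun v => -(σ v)) '' A) ⊆ range P.root ∧
      (A ∪ (fun v => -(σ v)) '' A) ∪ (fun v : M => -v) '' (A ∪ (fun v => -(σ v)) '' A)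
        = range P.root := by
  have hΔ : ∀ v ∈ range P.root, -v ∈ range P.root :=
    fun _ hv => P.toRootPairing.neg_mem_range_root_iff.mpr hv
  exact ⟨hAclosed.union_neg_map_image hΔ hσinv hcover hcap,
    union_neg_image_subset hΔ hσinv hcover, union_neg_image_union_neg_eq hΔ hσinv hcover⟩

/-- Let `Δ` be the set of roots of a finite, reduced, crystallographic root
system, and let `σ` be a linear involution of the ambient space with `σ(Δ) = Δ`; set
`θ := -σ`.  If `A ⊆ Δ` is closed with `A ∪ σ(A) = Δ` and `A ∩ σ(A) ⊆ -A`, then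
`Φ := A ∪ θ(A)` is a closed subset of `Δ` satisfying `Φ ∪ (-Φ) = Δ`, i.e. `Φ` is parabolic. -/
theorem closed_union_theta_is_parabolic
    [AddCommGroup M] [Module ℝ M] [AddCommGroup N] [Module ℝ N]
    [FiniteDimensional ℝ M] [Fintype ι]
    (P : RootSystem ι ℝ M N)
    (hcrys : P.IsCrystallographic) (hred : P.IsReduced)
    (σ : M ≃ₗ[ℝ] M)
    (hσΔ : σ '' range P.root = range P.root)
    (hσinv : ∀ v : M, σ (σ v) = v)
    (A : Set M)
    (hAΔ : A ⊆ range P.root)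
    (hAclosed : IsClosedSubset (range P.root) A)
    (hcover : A ∪ σ '' A = range P.root)
    (hcap : ∀ v ∈ A ∩ σ '' A, -v ∈ A) :
    IsClosedSubset (range P.root) (A ∪ (fun v => -(σ v)) '' A) ∧
      (A ∪ (fun v => -(σ v)) '' A) ⊆ range P.root ∧
      (A ∪ (fun v => -(σ v)) '' A) ∪ (fun v : M => -v) '' (A ∪ (fun v => -(σ v)) '' A)
        = range P.root :=
  closed_union_theta_is_parabolic_general P σ hσinv A hAclosed hcover hcap
end

section
/- Let Δ be the set of roots of a finite, reduced, crystallographic root system, let A ⊆ Δ be a closed subset, and set A₀ := A ∩ (−A). Then: (i) A₀ is closed and symmetric, and for all α, β ∈ A₀ the reflection s_α(β) = β − ⟨β, α∨⟩α lies in A₀; (ii) if α ∈ A₀, β ∈ A \ A₀ and α + β ∈ Δ, then α + β ∈ A \ A₀; (iii) if α, β ∈ A \ A₀ and α + β ∈ Δ, then α + β ∈ A \ A₀. -/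
/-!
Parts (ii) and (iii) rest on `-Δ = Δ`: if `α, β ∈ A` and `-(α + β) ∈ A`, then
`-β = -(α + β) + α ∈ A`, so `β ∈ A₀`.
For the reflections, when `α, β ∈ A₀` are linearly independent the `α`-string through `β` is
unbroken and contains `s_α(β) = β - ⟨β, α∨⟩α`; so `s_α(β)` is reached from `β` by repeatedly
adding `α` (or `-α`) while staying in `Δ`, and closedness of `A₀` keeps every step inside `A₀`.
When they are dependent, reducedness forces `β = ±α`.
-/
open Set

variable {ι M N : Type*}

open scoped Pointwise

lemma IsClosedSubset.add_nsmul_mem [AddMonoid M] {Δ A : Set M} (hA : IsClosedSubset Δ A)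
    {α β : M} (hα : α ∈ A) (hβ : β ∈ A) {n : ℕ} (hΔ : ∀ k ≤ n, β + k • α ∈ Δ) :
    β + n • α ∈ A := by
  induction n with
  | zero => simpa using hβ
  | succ n ih =>
    rw [succ_nsmul, ← add_assoc]
    exact hA _ (ih fun k hk => hΔ k (by omega)) _ hα
      (by rw [add_assoc, ← succ_nsmul]; exact hΔ _ le_rfl)

section NegClosed

variable [AddCommGroup M] {Δ A : Set M}

lemma IsClosedSubset.inter_neg (hΔ : ∀ x ∈ Δ, -x ∈ Δ) (hA : IsClosedSubset Δ A) :
    IsClosedSubset Δ (A ∩ -A) := by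
  rintro α ⟨hαA, hαA'⟩ β ⟨hβA, hβA'⟩ hαβ
  refine ⟨hA α hαA β hβA hαβ, ?_⟩
  rw [mem_neg, neg_add]
  exact hA _ hαA' _ hβA' (by rw [← neg_add]; exact hΔ _ hαβ)

lemma IsClosedSubset.add_mem_diff_inter_neg (hΔ : ∀ x ∈ Δ, -x ∈ Δ) (hAΔ : A ⊆ Δ)
    (hA : IsClosedSubset Δ A) {α β : M} (hα : α ∈ A) (hβ : β ∈ A \ (A ∩ -A))
    (hαβ : α + β ∈ Δ) : α + β ∈ A \ (A ∩ -A) := by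
  refine ⟨hA α hα β hβ.1 hαβ, fun ⟨_, hneg⟩ => hβ.2 ⟨hβ.1, ?_⟩⟩
  have hsum : -(α + β) + α = -β := by abel
  rw [mem_neg, ← hsum]
  exact hA _ hneg _ hα (by rw [hsum]; exact hΔ _ (hAΔ hβ.1))

end NegClosed

namespace RootPairing

variable {R : Type*} [Finite ι] [CommRing R] [CharZero R] [IsDomain R]
  [AddCommGroup M] [Module R M] [AddCommGroup N] [Module R N]
  {P : RootPairing ι R M N} [P.IsCrystallographic] {S : Set M} {i j : ι}

lemma root_add_nsmul_mem_of_isClosedSubset (hS : IsClosedSubset (range P.root) S)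
    (hli : LinearIndependent R ![P.root i, P.root j]) (hi : P.root i ∈ S) (hj : P.root j ∈ S)
    {n : ℕ} (hn : P.root j + n • P.root i ∈ range P.root) : P.root j + n • P.root i ∈ S :=
  hS.add_nsmul_mem hi hj fun _ hk => (P.root_add_nsmul_mem_range_iff_le_chainTopCoeff hli).mpr
    (hk.trans ((P.root_add_nsmul_mem_range_iff_le_chainTopCoeff hli).mp hn))

lemma root_add_zsmul_mem_of_isClosedSubset (hS : IsClosedSubset (range P.root) S)
    (hneg : ∀ x ∈ S, -x ∈ S) (hli : LinearIndependent R ![P.root i, P.root j])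
    (hi : P.root i ∈ S) (hj : P.root j ∈ S) {z : ℤ}
    (hz : P.root j + z • P.root i ∈ range P.root) : P.root j + z • P.root i ∈ S := by
  obtain ⟨n, rfl | rfl⟩ := z.eq_nat_or_neg
  · rw [natCast_zsmul] at hz ⊢
    exact root_add_nsmul_mem_of_isClosedSubset hS hli hi hj hz
  · have hi' : P.root (P.reflectionPerm i i) = -P.root i := by simp
    have hli' : LinearIndependent R ![P.root (P.reflectionPerm i i), P.root j] := by simpa
    rw [neg_smul, natCast_zsmul, ← smul_neg, ← hi'] at hz ⊢
    exact root_add_nsmul_mem_of_isClosedSubset hS hli' (hi' ▸ hneg _ hi) hj hz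

lemma reflection_root_mem_of_isClosedSubset [P.IsReduced]
    (hS : IsClosedSubset (range P.root) S)
    (hneg : ∀ x ∈ S, -x ∈ S) (hi : P.root i ∈ S) (hj : P.root j ∈ S) :
    P.reflection i (P.root j) ∈ S := by
  by_cases hli : LinearIndependent R ![P.root i, P.root j]
  · have hmem : P.reflection i (P.root j) ∈ range P.root := ⟨_, P.root_reflectionPerm i j⟩
    rw [reflection_apply_root' ℤ, sub_eq_add_neg, ← neg_smul] at hmem ⊢
    exact root_add_zsmul_mem_of_isClosedSubset hS hneg hli hi hj hmem
  · rcases IsReduced.eq_or_eq_neg i j hli with h | h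
    · rw [← h, reflection_apply_self]
      exact hneg _ hi
    · rw [neg_eq_iff_eq_neg.mp h.symm, map_neg, reflection_apply_self, neg_neg]
      exact hi

end RootPairing

theorem symmetric_part_of_closed_subset_general
    [AddCommGroup M] [Module ℝ M] [AddCommGroup N] [Module ℝ N]
    [Fintype ι]
    (P : RootPairing ι ℝ M N)
    (hcrys : P.IsCrystallographic) (hred : P.IsReduced)
    (A : Set M)
    (hAΔ : A ⊆ range P.root)
    (hAclosed : IsClosedSubset (range P.root) A)
    (A₀ : Set M) (hA₀ : A₀ = A ∩ {v | -v ∈ A}) :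
    (IsClosedSubset (range P.root) A₀ ∧ (∀ α ∈ A₀, -α ∈ A₀) ∧
      (∀ i : ι, P.root i ∈ A₀ → ∀ β ∈ A₀, P.reflection i β ∈ A₀)) ∧
    (∀ α ∈ A₀, ∀ β ∈ A \ A₀, α + β ∈ range P.root → α + β ∈ A \ A₀) ∧
    (∀ α ∈ A \ A₀, ∀ β ∈ A \ A₀, α + β ∈ range P.root → α + β ∈ A \ A₀) := by
  change A₀ = A ∩ -A at hA₀
  subst hA₀
  have hΔ : ∀ x ∈ range P.root, -x ∈ range P.root := fun _ => P.neg_mem_range_root_iff.mpr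
  have hsymm : ∀ α ∈ A ∩ -A, -α ∈ A ∩ -A :=
    fun _ ⟨hα, hα'⟩ => ⟨hα', by rwa [mem_neg, neg_neg]⟩
  have hclosed := hAclosed.inter_neg hΔ
  refine ⟨⟨hclosed, hsymm, fun i hi β hβ => ?_⟩,
    fun _ hα _ => hAclosed.add_mem_diff_inter_neg hΔ hAΔ hα.1,
    fun _ hα _ => hAclosed.add_mem_diff_inter_neg hΔ hAΔ hα.1⟩
  obtain ⟨j, rfl⟩ := hAΔ hβ.1
  exact P.reflection_root_mem_of_isClosedSubset hclosed hsymm hi hβ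

/-- Let `Δ` be the set of roots of a finite, reduced, crystallographic root
system, `A ⊆ Δ` a closed subset, and `A₀ := A ∩ (-A)`.  Then:
(i) `A₀` is closed, symmetric, and stable under the reflections `s_α` for `α ∈ A₀`;
(ii) if `α ∈ A₀`, `β ∈ A \ A₀` and `α + β ∈ Δ`, then `α + β ∈ A \ A₀`;
(iii) if `α, β ∈ A \ A₀` and `α + β ∈ Δ`, then `α + β ∈ A \ A₀`. -/
theorem symmetric_part_of_closed_subset
    [AddCommGroup M] [Module ℝ M] [AddCommGroup N] [Module ℝ N]
    [FiniteDimensional ℝ M] [Fintype ι]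
    (P : RootPairing ι ℝ M N) (hP_span : Submodule.span ℝ (range P.root) = ⊤)
    (hcrys : P.IsCrystallographic) (hred : P.IsReduced)
    (A : Set M)
    (hAΔ : A ⊆ range P.root)
    (hAclosed : IsClosedSubset (range P.root) A)
    (A₀ : Set M) (hA₀ : A₀ = A ∩ {v | -v ∈ A}) :
    (IsClosedSubset (range P.root) A₀ ∧ (∀ α ∈ A₀, -α ∈ A₀) ∧
      (∀ i : ι, P.root i ∈ A₀ → ∀ β ∈ A₀, P.reflection i β ∈ A₀)) ∧
    (∀ α ∈ A₀, ∀ β ∈ A \ A₀, α + β ∈ range P.root → α + β ∈ A \ A₀) ∧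
    (∀ α ∈ A \ A₀, ∀ β ∈ A \ A₀, α + β ∈ range P.root → α + β ∈ A \ A₀) :=
  symmetric_part_of_closed_subset_general P hcrys hred A hAΔ hAclosed A₀ hA₀
end

section
/- Let 𝔤 be a finite-dimensional complex Lie algebra equipped with a conjugation σ that is moreover a Lie algebra automorphism (σ(⁅x,y⁆) = ⁅σ(x),σ(y)⁆). Suppose 𝔤 = I₁ ⊕ I₂ is an internal direct sum of two Lie ideals with σ(I₁) = I₁ and σ(I₂) = I₂, each Iⱼ being a semisimple complex Lie algebra. Let e = e₁ + e₂ with eⱼ ∈ Iⱼ, σ(e) = e, and ad(e) nilpotent. Assume for j = 1, 2: every complex Lie subalgebra Eⱼ ⊆ Iⱼ containing {x ∈ Iⱼ : ⁅x, eⱼ⁆ = 0} and satisfying Eⱼ + σ(Eⱼ) = Iⱼ equals Iⱼ. Then every complex Lie subalgebra E ⊆ 𝔤 containing {x ∈ 𝔤 : ⁅x, e⁆ = 0} and satisfying E + σ(E) = 𝔤 equals 𝔤. -/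
/-!
Since `⁅I₁, I₂⁆ = 0`, the projection `p` of `𝔤` onto `I₁` along `I₂` is a Lie algebra morphism,
and it commutes with `σ` because both ideals are `σ`-stable. Hence `p(E)` is a subalgebra of `I₁`
containing the centralizer of `e₁` in `I₁` with `p(E) + σ(p(E)) = I₁`, so `p(E) = I₁`. Then
`E ∩ I₁` is an ideal of `I₁` containing the centralizer of `e₁`, in particular `e₁` itself. Its
complementary ideal (which exists as `I₁` is semisimple) commutes with `e₁`, hence lies in
`E ∩ I₁` and is zero. Thus `I₁ ⊆ E`, symmetrically `I₂ ⊆ E`, and `E = 𝔤`.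
-/

open Set

namespace LieIdeal

variable {R L : Type*} [CommRing R] [LieRing L] [LieAlgebra R L] {I J : LieIdeal R L}

lemma lie_eq_zero_of_disjoint (h : Disjoint I J) {x y : L} (hx : x ∈ I) (hy : y ∈ J) :
    ⁅x, y⁆ = 0 :=
  (LieSubmodule.mem_bot _).1 <| h.le_bot <| LieSubmodule.lie_le_inf I J <|
    LieSubmodule.lie_mem_lie hx hy

lemma lie_add_eq_of_disjoint (h : Disjoint I J) {x y z : L} (hx : x ∈ I) (hz : z ∈ J) :
    ⁅x, y + z⁆ = ⁅x, y⁆ := by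
  rw [lie_add, lie_eq_zero_of_disjoint h hx hz, add_zero]

lemma eq_top_of_isCompl_of_forall_lie_eq_zero_mem (h : IsCompl I J) {e : L}
    (he : ∀ x, ⁅x, e⁆ = 0 → x ∈ I) : I = ⊤ := by
  have heI : e ∈ I := he e (lie_self e)
  have hJ : J = ⊥ := (LieSubmodule.eq_bot_iff J).2 fun x hx ↦
    (LieSubmodule.mem_bot x).1 <| h.disjoint.le_bot
      ⟨he x (lie_eq_zero_of_disjoint h.disjoint.symm hx heI), hx⟩
  exact codisjoint_bot.1 (hJ ▸ h.codisjoint)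

noncomputable def projection (h : IsCompl I J) : L →ₗ⁅R⁆ L where
  toLinearMap := I.toSubmodule.projection J.toSubmodule (LieSubmodule.isCompl_toSubmodule.2 h)
  map_lie' {v w} := by
    have hIJ := LieSubmodule.isCompl_toSubmodule.2 h
    set p := I.toSubmodule.projection J.toSubmodule hIJ
    set q := J.toSubmodule.projection I.toSubmodule hIJ.symm
    have hpI : ∀ x, p x ∈ I := Submodule.projection_apply_mem hIJ
    have hqJ : ∀ x, q x ∈ J := Submodule.projection_apply_mem hIJ.symm
    have hsplit : ⁅v, w⁆ = ⁅p v, p w⁆ + ⁅q v, q w⁆ := by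
      conv_lhs => rw [← Submodule.projection_add_projection_eq_self hIJ v,
        ← Submodule.projection_add_projection_eq_self hIJ w]
      rw [add_lie, lie_add, lie_add, lie_eq_zero_of_disjoint h.disjoint (hpI v) (hqJ w),
        lie_eq_zero_of_disjoint h.disjoint.symm (hqJ v) (hpI w), add_zero, zero_add]
    change p ⁅v, w⁆ = ⁅p v, p w⁆
    rw [hsplit, map_add, Submodule.projection_apply_of_mem_left hIJ (I.lie_mem (hpI w)),
      Submodule.projection_apply_of_mem_right hIJ (J.lie_mem (hqJ w)), add_zero]

section projection

variable (h : IsCompl I J)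

lemma projection_apply_mem (v : L) : projection h v ∈ I :=
  Submodule.projection_apply_mem _ v

lemma projection_add_projection (v : L) : projection h v + projection h.symm v = v :=
  Submodule.projection_add_projection_eq_self _ v

lemma projection_apply_of_mem_left {x : L} (hx : x ∈ I) : projection h x = x :=
  Submodule.projection_apply_of_mem_left _ hx

lemma projection_apply_of_mem_right {x : L} (hx : x ∈ J) : projection h x = 0 :=
  Submodule.projection_apply_of_mem_right _ hx

lemma projection_apply_map {F : Type*} [FunLike F L L] [AddMonoidHomClass F L L] {σ : F}
    (hσI : MapsTo σ I I) (hσJ : MapsTo σ J J) (v : L) :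
    projection h (σ v) = σ (projection h v) := by
  conv_lhs => rw [← projection_add_projection h v, map_add, map_add]
  rw [projection_apply_of_mem_left h (hσI (projection_apply_mem h v)),
    projection_apply_of_mem_right h (hσJ (projection_apply_mem h.symm v)), add_zero]

/-- `E ∩ I`, as an ideal of `I`: it is one because `⁅projection h w, m⁆ = ⁅w, m⁆` for `m ∈ I`. -/
def comapSubalgebra (E : LieSubalgebra R L) (hE : (I : Set L) ⊆ E.map (projection h)) :
    LieIdeal R I where
  toSubmodule := (E.comap I.incl).toSubmodule
  lie_mem {x m} hm := by
    obtain ⟨w, hw, hwx⟩ := (LieSubalgebra.mem_map _ E _).1 (hE x.2)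
    change ⁅(x : L), (m : L)⁆ ∈ E
    have hwm : ⁅(x : L), (m : L)⁆ = ⁅w, (m : L)⁆ := by
      rw [← hwx]
      conv_rhs => rw [← projection_add_projection h w, add_lie,
        lie_eq_zero_of_disjoint h.disjoint.symm (projection_apply_mem h.symm w) m.2, add_zero]
    exact hwm ▸ E.lie_mem hw hm

end projection

lemma coe_map_projection_eq {F : Type*} [FunLike F L L] [AddMonoidHomClass F L L] {σ : F}
    {e : L} {E : LieSubalgebra R L} (h : IsCompl I J) (hσI : MapsTo σ I I) (hσJ : MapsTo σ J J)
    (hI : ∀ E' : LieSubalgebra R L, (E' : Set L) ⊆ I → (∀ x ∈ I, ⁅x, e⁆ = 0 → x ∈ E') →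
      (∀ v ∈ I, ∃ a ∈ E', ∃ b ∈ E', v = a + σ b) → (E' : Set L) = I)
    (hcent : ∀ x ∈ I, ⁅x, e⁆ = 0 → x ∈ E) (hsum : ∀ v, ∃ a ∈ E, ∃ b ∈ E, v = a + σ b) :
    (E.map (projection h) : Set L) = I := by
  refine hI _ ?_ ?_ ?_
  · rintro _ ⟨w, -, rfl⟩
    exact projection_apply_mem h w
  · intro x hx hxe
    exact ⟨x, hcent x hx hxe, projection_apply_of_mem_left h hx⟩
  · intro v hv
    obtain ⟨a, ha, b, hb, rfl⟩ := hsum v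
    refine ⟨projection h a, ⟨a, ha, rfl⟩, projection h b, ⟨b, hb, rfl⟩, ?_⟩
    rw [← projection_apply_map h hσI hσJ, ← map_add, projection_apply_of_mem_left h hv]

lemma coe_subset_of_subset_map_projection [LieAlgebra.IsSemisimple R I] (h : IsCompl I J)
    {E : LieSubalgebra R L} (hE : (I : Set L) ⊆ E.map (projection h)) {e : L} (he : e ∈ I)
    (hcent : ∀ x ∈ I, ⁅x, e⁆ = 0 → x ∈ E) : (I : Set L) ⊆ E := by
  have hN : comapSubalgebra h E hE = ⊤ :=
    eq_top_of_isCompl_of_forall_lie_eq_zero_mem isCompl_compl (e := ⟨e, he⟩) fun x hx ↦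
      hcent x x.2 (congrArg Subtype.val hx)
  intro x hx
  have hxN : (⟨x, hx⟩ : I) ∈ comapSubalgebra h E hE := hN ▸ LieSubmodule.mem_top _
  exact hxN

end LieIdeal

open LieIdeal in
theorem subalgebra_eq_top_of_summands_general {𝔤 : Type*} [LieRing 𝔤] [LieAlgebra ℂ 𝔤]
    (σ : 𝔤 →ₛₗ[starRingEnd ℂ] 𝔤)
    (I₁ I₂ : LieIdeal ℂ 𝔤)
    (hcompl : IsCompl (I₁ : Submodule ℂ 𝔤) (I₂ : Submodule ℂ 𝔤))
    (hσI₁ : σ '' (I₁ : Set 𝔤) = I₁) (hσI₂ : σ '' (I₂ : Set 𝔤) = I₂)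
    (hss₁ : LieAlgebra.IsSemisimple ℂ I₁) (hss₂ : LieAlgebra.IsSemisimple ℂ I₂)
    (e₁ e₂ : 𝔤) (he₁ : e₁ ∈ I₁) (he₂ : e₂ ∈ I₂)
    (h₁ : ∀ E : LieSubalgebra ℂ 𝔤, (E : Set 𝔤) ⊆ I₁ →
      (∀ x ∈ I₁, ⁅x, e₁⁆ = 0 → x ∈ E) →
      (∀ v ∈ I₁, ∃ a ∈ E, ∃ b ∈ E, v = a + σ b) →
      (E : Set 𝔤) = I₁)
    (h₂ : ∀ E : LieSubalgebra ℂ 𝔤, (E : Set 𝔤) ⊆ I₂ →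
      (∀ x ∈ I₂, ⁅x, e₂⁆ = 0 → x ∈ E) →
      (∀ v ∈ I₂, ∃ a ∈ E, ∃ b ∈ E, v = a + σ b) →
      (E : Set 𝔤) = I₂)
    (E : LieSubalgebra ℂ 𝔤)
    (hcent : ∀ x : 𝔤, ⁅x, e₁ + e₂⁆ = 0 → x ∈ E)
    (hsum : ∀ v : 𝔤, ∃ a ∈ E, ∃ b ∈ E, v = a + σ b) :
    E = ⊤ := by
  have hI := LieSubmodule.isCompl_toSubmodule.1 hcompl
  have hσ₁ : MapsTo σ I₁ I₁ := mapsTo_iff_image_subset.2 hσI₁.le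
  have hσ₂ : MapsTo σ I₂ I₂ := mapsTo_iff_image_subset.2 hσI₂.le
  have hcent₁ : ∀ x ∈ I₁, ⁅x, e₁⁆ = 0 → x ∈ E := fun x hx hxe ↦
    hcent x (by rw [lie_add_eq_of_disjoint hI.disjoint hx he₂, hxe])
  have hcent₂ : ∀ x ∈ I₂, ⁅x, e₂⁆ = 0 → x ∈ E := fun x hx hxe ↦
    hcent x (by rw [add_comm, lie_add_eq_of_disjoint hI.symm.disjoint hx he₁, hxe])
  have hE₁ : (I₁ : Set 𝔤) ⊆ E := coe_subset_of_subset_map_projection hI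
    (coe_map_projection_eq hI hσ₁ hσ₂ h₁ hcent₁ hsum).ge he₁ hcent₁
  have hE₂ : (I₂ : Set 𝔤) ⊆ E := coe_subset_of_subset_map_projection hI.symm
    (coe_map_projection_eq hI.symm hσ₂ hσ₁ h₂ hcent₂ hsum).ge he₂ hcent₂
  refine eq_top_iff.2 fun v _ ↦ ?_
  rw [← projection_add_projection hI v]
  exact E.add_mem (hE₁ (projection_apply_mem hI v)) (hE₂ (projection_apply_mem hI.symm v))

/-- Let `𝔤` be a finite-dimensional complex Lie algebra with a conjugation `σ`
which is a Lie algebra automorphism, and let `𝔤 = I₁ ⊕ I₂` be an internal direct sum of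
σ-stable semisimple Lie ideals.  Let `e = e₁ + e₂` with `eⱼ ∈ Iⱼ`, `σ(e) = e` and `ad(e)`
nilpotent.  If for `j = 1, 2` every complex Lie subalgebra of `Iⱼ` containing the centralizer
of `eⱼ` in `Iⱼ` and summing with its conjugate to `Iⱼ` equals `Iⱼ`, then every complex Lie
subalgebra `E ⊆ 𝔤` containing the centralizer of `e` with `E + σ(E) = 𝔤` equals `𝔤`. -/
theorem subalgebra_eq_top_of_summands {𝔤 : Type*} [LieRing 𝔤] [LieAlgebra ℂ 𝔤]
    [FiniteDimensional ℂ 𝔤]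
    (σ : 𝔤 →ₛₗ[starRingEnd ℂ] 𝔤)
    (hσinv : ∀ x, σ (σ x) = x)
    (hσlie : ∀ x y, σ ⁅x, y⁆ = ⁅σ x, σ y⁆)
    (I₁ I₂ : LieIdeal ℂ 𝔤)
    (hcompl : IsCompl (I₁ : Submodule ℂ 𝔤) (I₂ : Submodule ℂ 𝔤))
    (hσI₁ : σ '' (I₁ : Set 𝔤) = I₁) (hσI₂ : σ '' (I₂ : Set 𝔤) = I₂)
    (hss₁ : LieAlgebra.IsSemisimple ℂ I₁) (hss₂ : LieAlgebra.IsSemisimple ℂ I₂)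
    (e₁ e₂ : 𝔤) (he₁ : e₁ ∈ I₁) (he₂ : e₂ ∈ I₂)
    (hσe : σ (e₁ + e₂) = e₁ + e₂)
    (hnil : IsNilpotent (LieAlgebra.ad ℂ 𝔤 (e₁ + e₂)))
    (h₁ : ∀ E : LieSubalgebra ℂ 𝔤, (E : Set 𝔤) ⊆ I₁ →
      (∀ x ∈ I₁, ⁅x, e₁⁆ = 0 → x ∈ E) →
      (∀ v ∈ I₁, ∃ a ∈ E, ∃ b ∈ E, v = a + σ b) →
      (E : Set 𝔤) = I₁)
    (h₂ : ∀ E : LieSubalgebra ℂ 𝔤, (E : Set 𝔤) ⊆ I₂ →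
      (∀ x ∈ I₂, ⁅x, e₂⁆ = 0 → x ∈ E) →
      (∀ v ∈ I₂, ∃ a ∈ E, ∃ b ∈ E, v = a + σ b) →
      (E : Set 𝔤) = I₂)
    (E : LieSubalgebra ℂ 𝔤)
    (hcent : ∀ x : 𝔤, ⁅x, e₁ + e₂⁆ = 0 → x ∈ E)
    (hsum : ∀ v : 𝔤, ∃ a ∈ E, ∃ b ∈ E, v = a + σ b) :
    E = ⊤ :=
  subalgebra_eq_top_of_summands_general σ I₁ I₂ hcompl hσI₁ hσI₂ hss₁ hss₂ e₁ e₂ he₁ he₂ h₁ h₂ E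
    hcent hsum
end

section
/- Let 𝔤 be a finite-dimensional complex Lie algebra equipped with a conjugation σ that is a Lie algebra automorphism. Suppose 𝔤 = 𝔨 ⊕ 𝔭 is an internal direct sum of σ-stable complex subspaces, where 𝔨 is a Lie subalgebra and ⁅𝔨, 𝔭⁆ ⊆ 𝔭, and suppose that every complex subspace W ⊆ 𝔭 with ⁅𝔨, W⁆ ⊆ W and σ(W) = W equals 0 or 𝔭 (i.e. the real form of 𝔭 is an irreducible 𝔨-module). Let E be a complex Lie subalgebra of 𝔤 with 𝔨 ⊆ E and E + σ(E) = 𝔤. Then either E = 𝔤, or, setting 𝔞 := E ∩ 𝔭: E = 𝔨 ⊕ 𝔞, 𝔭 = 𝔞 ⊕ σ(𝔞) (internal direct sum), and the only complex subspaces W ⊆ 𝔞 with ⁅𝔨, W⁆ ⊆ W are 0 and 𝔞. -/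
/-!
Put `𝔞 := E ∩ 𝔭`. Since `𝔨 ⊆ E`, modularity gives `E = 𝔨 ⊕ 𝔞`, and then `E + σ(E) = 𝔤`
forces `𝔞 + σ(𝔞) = 𝔭`. The subspace `𝔞 ∩ σ(𝔞)` is σ-stable and `𝔨`-stable, so it is `0` or `𝔭`;
in the second case `𝔭 ⊆ E` and `E = 𝔤`. In the first case `𝔭 = 𝔞 ⊕ σ(𝔞)`, and a nonzero
`𝔨`-stable `W ⊆ 𝔞` has `W + σ(W) = 𝔭` by irreducibility, whence `𝔞 = W ⊕ (𝔞 ∩ σ(W)) = W`.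
-/

theorem IsCompl.sup_inf_eq_of_le {α : Type*} [Lattice α] [BoundedOrder α] [IsModularLattice α]
    {a b c : α} (h : IsCompl a b) (hac : a ≤ c) : a ⊔ c ⊓ b = c := by
  rw [inf_comm, ← sup_inf_assoc_of_le b hac, h.sup_eq_top, top_inf_eq]

namespace Submodule

variable {R M : Type*} [Ring R] [AddCommGroup M] [Module R M]
  {τ : R →+* R} [RingHomSurjective τ] {σ : M →ₛₗ[τ] M}

theorem map_map_of_involutive (hσ : Function.Involutive σ) (X : Submodule R M) :
    (X.map σ).map σ = X := by
  ext x
  refine ⟨?_, fun hx => ⟨σ x, mem_map_of_mem hx, hσ x⟩⟩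
  rintro ⟨_, ⟨y, hy, rfl⟩, rfl⟩
  rwa [hσ y]

theorem map_eq_of_involutive_of_map_le (hσ : Function.Involutive σ) {X : Submodule R M}
    (h : X.map σ ≤ X) : X.map σ = X :=
  le_antisymm h (by simpa only [map_map_of_involutive hσ] using map_mono (f := σ) h)

theorem map_sup_map_self (hσ : Function.Involutive σ) (X : Submodule R M) :
    (X ⊔ X.map σ).map σ = X ⊔ X.map σ := by
  rw [map_sup, map_map_of_involutive hσ, sup_comm]

theorem map_inf_map_self (hσ : Function.Involutive σ) (X : Submodule R M) :
    (X ⊓ X.map σ).map σ = X ⊓ X.map σ :=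
  map_eq_of_involutive_of_map_le hσ <| map_inf_le σ |>.trans <| by
    rw [map_map_of_involutive hσ, inf_comm]

theorem sup_map_inf_eq_of_isCompl {K P E : Submodule R M} (hKP : IsCompl K P) (hKE : K ≤ E)
    (hK : K.map σ ≤ K) (hP : P.map σ ≤ P) (hE : E ⊔ E.map σ = ⊤) :
    E ⊓ P ⊔ (E ⊓ P).map σ = P := by
  refine (le_iff_eq_of_codisjoint_of_disjoint ?_ hKP.disjoint).1
    (sup_le inf_le_right ((map_mono inf_le_right).trans hP))
  set A := E ⊓ P
  rw [codisjoint_iff, eq_top_iff]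
  calc ⊤ = E ⊔ E.map σ := hE.symm
    _ = K ⊔ A ⊔ (K.map σ ⊔ A.map σ) := by rw [← map_sup, hKP.sup_inf_eq_of_le hKE]
    _ ≤ A ⊔ A.map σ ⊔ K :=
      sup_le (sup_le le_sup_right (le_sup_left.trans le_sup_left))
        (sup_le (hK.trans le_sup_right) (le_sup_right.trans le_sup_left))

end Submodule

namespace LieSubalgebra

open Submodule

variable {R L : Type*} [CommRing R] [LieRing L] [LieAlgebra R L]

def AdStable (K : LieSubalgebra R L) (W : Submodule R L) : Prop :=
  ∀ k ∈ K, ∀ w ∈ W, ⁅k, w⁆ ∈ W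

variable {K : LieSubalgebra R L} {V W : Submodule R L}

theorem adStable_of_le {E : LieSubalgebra R L} (hKE : K ≤ E) : AdStable K E :=
  fun _ hk _ hw => E.lie_mem (hKE hk) hw

theorem AdStable.inf (hV : AdStable K V) (hW : AdStable K W) : AdStable K (V ⊓ W) :=
  fun k hk _ hx => ⟨hV k hk _ hx.1, hW k hk _ hx.2⟩

theorem AdStable.sup (hV : AdStable K V) (hW : AdStable K W) : AdStable K (V ⊔ W) := by
  intro k hk x hx
  obtain ⟨v, hv, w, hw, rfl⟩ := mem_sup.1 hx
  rw [lie_add]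
  exact add_mem_sup (hV k hk v hv) (hW k hk w hw)

variable {τ : R →+* R} [RingHomSurjective τ] {σ : L →ₛₗ[τ] L}

theorem AdStable.map (hσ : Function.Involutive σ) (hσlie : ∀ x y, σ ⁅x, y⁆ = ⁅σ x, σ y⁆)
    (hK : (K : Submodule R L).map σ ≤ K) (hW : AdStable K W) : AdStable K (W.map σ) := by
  rintro k hk _ ⟨w, hw, rfl⟩
  refine ⟨⁅σ k, w⁆, hW _ (hK (mem_map_of_mem hk)) w hw, ?_⟩
  rw [hσlie, hσ k]

theorem AdStable.eq_bot_or_eq_of_inf_map_eq_bot (hσ : Function.Involutive σ)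
    (hσlie : ∀ x y, σ ⁅x, y⁆ = ⁅σ x, σ y⁆) (hK : (K : Submodule R L).map σ ≤ K)
    {P A : Submodule R L}
    (hirr : ∀ W : Submodule R L, W ≤ P → AdStable K W → W.map σ = W → W = ⊥ ∨ W = P)
    (hAP : A ⊔ A.map σ = P) (hA : A ⊓ A.map σ = ⊥) (hWA : W ≤ A) (hW : AdStable K W) :
    W = ⊥ ∨ W = A := by
  have hWP : W ⊔ W.map σ ≤ P := hAP ▸ sup_le_sup hWA (map_mono hWA)
  rcases hirr _ hWP (hW.sup (hW.map hσ hσlie hK)) (map_sup_map_self hσ W) with h | h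
  · exact Or.inl (le_bot_iff.1 (h ▸ le_sup_left))
  · refine Or.inr (eq_of_le_of_inf_le_of_le_sup hWA ?_ (h ▸ hAP ▸ le_sup_left))
    exact hA ▸ inf_le_inf_left A (map_mono hWA) |>.trans bot_le

end LieSubalgebra

open LieSubalgebra Submodule in
theorem subalgebra_of_irreducible_isotropy_general {𝔤 : Type*} [LieRing 𝔤] [LieAlgebra ℂ 𝔤]
    (σ : 𝔤 →ₛₗ[starRingEnd ℂ] 𝔤)
    (hσinv : ∀ x, σ (σ x) = x)
    (hσlie : ∀ x y, σ ⁅x, y⁆ = ⁅σ x, σ y⁆)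
    (𝔨 : LieSubalgebra ℂ 𝔤) (𝔭 : Submodule ℂ 𝔤)
    (hcompl : IsCompl (𝔨 : Submodule ℂ 𝔤) 𝔭)
    (hσ𝔨 : Submodule.map σ (𝔨 : Submodule ℂ 𝔤) = 𝔨)
    (hσ𝔭 : Submodule.map σ 𝔭 = 𝔭)
    (hbr : ∀ k ∈ 𝔨, ∀ p ∈ 𝔭, ⁅k, p⁆ ∈ 𝔭)
    (hirr : ∀ W : Submodule ℂ 𝔤, W ≤ 𝔭 → (∀ k ∈ 𝔨, ∀ w ∈ W, ⁅k, w⁆ ∈ W) →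
      Submodule.map σ W = W → W = ⊥ ∨ W = 𝔭)
    (E : LieSubalgebra ℂ 𝔤)
    (h𝔨E : 𝔨 ≤ E)
    (hsum : ∀ v : 𝔤, ∃ a ∈ E, ∃ b ∈ E, v = a + σ b) :
    E = ⊤ ∨
      ((E : Submodule ℂ 𝔤) = (𝔨 : Submodule ℂ 𝔤) ⊔ ((E : Submodule ℂ 𝔤) ⊓ 𝔭) ∧
        ((E : Submodule ℂ 𝔤) ⊓ 𝔭) ⊔ Submodule.map σ ((E : Submodule ℂ 𝔤) ⊓ 𝔭) = 𝔭 ∧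
        ((E : Submodule ℂ 𝔤) ⊓ 𝔭) ⊓ Submodule.map σ ((E : Submodule ℂ 𝔤) ⊓ 𝔭) = ⊥ ∧
        (∀ W : Submodule ℂ 𝔤, W ≤ (E : Submodule ℂ 𝔤) ⊓ 𝔭 →
          (∀ k ∈ 𝔨, ∀ w ∈ W, ⁅k, w⁆ ∈ W) → W = ⊥ ∨ W = (E : Submodule ℂ 𝔤) ⊓ 𝔭)) := by
  have hσ : Function.Involutive σ := hσinv
  have hEσE : (E : Submodule ℂ 𝔤) ⊔ (E : Submodule ℂ 𝔤).map σ = ⊤ :=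
    eq_top_iff.2 fun v _ => by
      obtain ⟨a, ha, b, hb, rfl⟩ := hsum v
      exact add_mem_sup ha (mem_map_of_mem hb)
  have hspan := sup_map_inf_eq_of_isCompl hcompl h𝔨E hσ𝔨.le hσ𝔭.le hEσE
  have h𝔞 : AdStable 𝔨 ((E : Submodule ℂ 𝔤) ⊓ 𝔭) := (adStable_of_le h𝔨E).inf hbr
  rcases hirr _ (inf_le_left.trans inf_le_right) (h𝔞.inf (h𝔞.map hσ hσlie hσ𝔨.le))
    (map_inf_map_self hσ _) with h𝔞σ𝔞 | h𝔞σ𝔞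
  · exact Or.inr ⟨(hcompl.sup_inf_eq_of_le h𝔨E).symm, hspan, h𝔞σ𝔞,
      fun W hW𝔞 hW =>
        AdStable.eq_bot_or_eq_of_inf_map_eq_bot hσ hσlie hσ𝔨.le hirr hspan h𝔞σ𝔞 hW𝔞 hW⟩
  · have h𝔭E : 𝔭 ≤ E := h𝔞σ𝔞 ▸ inf_le_left.trans inf_le_left
    exact Or.inl <| (toSubmodule_eq_top E).1 <| eq_top_iff.2 <|
      hcompl.sup_eq_top ▸ sup_le h𝔨E h𝔭E

/-- Let `𝔤` be a finite-dimensional complex Lie algebra with conjugation `σ`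
which is a Lie algebra automorphism, `𝔤 = 𝔨 ⊕ 𝔭` an internal direct sum of σ-stable subspaces
with `𝔨` a Lie subalgebra and `⁅𝔨, 𝔭⁆ ⊆ 𝔭`, such that the only σ-stable `𝔨`-submodules of `𝔭`
are `0` and `𝔭`.  If `E` is a complex Lie subalgebra with `𝔨 ⊆ E` and `E + σ(E) = 𝔤`, then
either `E = 𝔤`, or `E = 𝔨 ⊕ 𝔞` with `𝔞 := E ∩ 𝔭`, `𝔭 = 𝔞 ⊕ σ(𝔞)`, and `𝔞` is an irreducible
`𝔨`-module. -/
theorem subalgebra_of_irreducible_isotropy {𝔤 : Type*} [LieRing 𝔤] [LieAlgebra ℂ 𝔤]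
    [FiniteDimensional ℂ 𝔤]
    (σ : 𝔤 →ₛₗ[starRingEnd ℂ] 𝔤)
    (hσinv : ∀ x, σ (σ x) = x)
    (hσlie : ∀ x y, σ ⁅x, y⁆ = ⁅σ x, σ y⁆)
    (𝔨 : LieSubalgebra ℂ 𝔤) (𝔭 : Submodule ℂ 𝔤)
    (hcompl : IsCompl (𝔨 : Submodule ℂ 𝔤) 𝔭)
    (hσ𝔨 : Submodule.map σ (𝔨 : Submodule ℂ 𝔤) = 𝔨)
    (hσ𝔭 : Submodule.map σ 𝔭 = 𝔭)
    (hbr : ∀ k ∈ 𝔨, ∀ p ∈ 𝔭, ⁅k, p⁆ ∈ 𝔭)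
    (hirr : ∀ W : Submodule ℂ 𝔤, W ≤ 𝔭 → (∀ k ∈ 𝔨, ∀ w ∈ W, ⁅k, w⁆ ∈ W) →
      Submodule.map σ W = W → W = ⊥ ∨ W = 𝔭)
    (E : LieSubalgebra ℂ 𝔤)
    (h𝔨E : 𝔨 ≤ E)
    (hsum : ∀ v : 𝔤, ∃ a ∈ E, ∃ b ∈ E, v = a + σ b) :
    E = ⊤ ∨
      ((E : Submodule ℂ 𝔤) = (𝔨 : Submodule ℂ 𝔤) ⊔ ((E : Submodule ℂ 𝔤) ⊓ 𝔭) ∧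
        ((E : Submodule ℂ 𝔤) ⊓ 𝔭) ⊔ Submodule.map σ ((E : Submodule ℂ 𝔤) ⊓ 𝔭) = 𝔭 ∧
        ((E : Submodule ℂ 𝔤) ⊓ 𝔭) ⊓ Submodule.map σ ((E : Submodule ℂ 𝔤) ⊓ 𝔭) = ⊥ ∧
        (∀ W : Submodule ℂ 𝔤, W ≤ (E : Submodule ℂ 𝔤) ⊓ 𝔭 →
          (∀ k ∈ 𝔨, ∀ w ∈ W, ⁅k, w⁆ ∈ W) → W = ⊥ ∨ W = (E : Submodule ℂ 𝔤) ⊓ 𝔭)) :=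
  subalgebra_of_irreducible_isotropy_general σ hσinv hσlie 𝔨 𝔭 hcompl hσ𝔨 hσ𝔭 hbr hirr E h𝔨E hsum
end

section
/- Let 𝔤 be a finite-dimensional complex Lie algebra with trivial center, decomposed as an internal direct sum 𝔤 = 𝔨 ⊕ 𝔭 of subspaces where 𝔨 is a Lie subalgebra, ⁅𝔨, 𝔭⁆ ⊆ 𝔭, ⁅𝔭, 𝔭⁆ ⊆ 𝔨, and ⁅𝔭, 𝔭⁆ ≠ 0. Suppose z ∈ 𝔨 is a nonzero element with ⁅z, k⁆ = 0 for all k ∈ 𝔨, and suppose 𝔭 is spanned by eigenvectors of ad(z) (i.e. 𝔭 is the sum over μ ∈ ℂ of the subspaces {v ∈ 𝔭 : ⁅z, v⁆ = μ • v}). Then there exists a complex subspace 𝔞 ⊆ 𝔭 with ⁅𝔨, 𝔞⁆ ⊆ 𝔞, 𝔞 ≠ 0, and 𝔞 ≠ 𝔭; that is, 𝔭 is not an irreducible 𝔨-module. -/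
/-!
Since `z` is central in `𝔨`, each eigenspace `𝔭_μ = {v ∈ 𝔭 : ⁅z, v⁆ = μ • v}` is `𝔨`-stable. If `𝔭`
were irreducible, each `𝔭_μ` would be `0` or `𝔭`, and as `𝔭 ≠ 0` is their sum, `ad z` would act on
`𝔭` by a single scalar `μ`. Then `μ ≠ 0`, for otherwise `z` would be central in `𝔤 = 𝔨 ⊕ 𝔭`. But
for `p, q ∈ 𝔭` the bracket `⁅p, q⁆ ∈ 𝔨` is killed by `ad z` and also has weight `2μ`, so it vanishes.
-/

theorem exists_eq_of_eq_iSup_of_forall_eq_bot_or_eq {α ι : Type*} [CompleteLattice α]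
    {a : α} {f : ι → α} (h : a = ⨆ i, f i) (hf : ∀ i, f i = ⊥ ∨ f i = a) (ha : a ≠ ⊥) :
    ∃ i, f i = a := by
  by_contra! hne
  exact ha (h.trans (iSup_eq_bot.mpr fun i => (hf i).resolve_right (hne i)))

section

variable {R L : Type*} [CommRing R] [LieRing L] [LieAlgebra R L]

theorem LieAlgebra.mem_ker_ad_sub_smul_iff {z v : L} {μ : R} :
    v ∈ LinearMap.ker (LieAlgebra.ad R L z - μ • LinearMap.id) ↔ ⁅z, v⁆ = μ • v := by
  simp [sub_eq_zero]

theorem lie_lie_eq_add_smul_of_lie_eq_smul {z p q : L} {μ ν : R} (hp : ⁅z, p⁆ = μ • p)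
    (hq : ⁅z, q⁆ = ν • q) : ⁅z, ⁅p, q⁆⁆ = (μ + ν) • ⁅p, q⁆ := by
  rw [leibniz_lie, hp, hq, smul_lie, lie_smul, add_smul]

theorem lie_mem_inf_ker_ad_sub_smul {𝔨 𝔭 : Submodule R L} (h𝔨𝔭 : ∀ x ∈ 𝔨, ∀ p ∈ 𝔭, ⁅x, p⁆ ∈ 𝔭)
    {z : L} (hzc : ∀ k ∈ 𝔨, ⁅z, k⁆ = 0) (μ : R) {k a : L} (hk : k ∈ 𝔨)
    (ha : a ∈ 𝔭 ⊓ LinearMap.ker (LieAlgebra.ad R L z - μ • LinearMap.id)) :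
    ⁅k, a⁆ ∈ 𝔭 ⊓ LinearMap.ker (LieAlgebra.ad R L z - μ • LinearMap.id) := by
  rw [Submodule.mem_inf, LieAlgebra.mem_ker_ad_sub_smul_iff] at ha ⊢
  refine ⟨h𝔨𝔭 k hk a ha.1, ?_⟩
  have hzk : ⁅z, k⁆ = (0 : R) • k := by rw [hzc k hk, zero_smul]
  rw [lie_lie_eq_add_smul_of_lie_eq_smul hzk ha.2, zero_add]

theorem lie_eq_zero_of_sup_eq_top {𝔨 𝔭 : Submodule R L} (hsup : 𝔨 ⊔ 𝔭 = ⊤) {z : L}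
    (h𝔨 : ∀ k ∈ 𝔨, ⁅z, k⁆ = 0) (h𝔭 : ∀ p ∈ 𝔭, ⁅z, p⁆ = 0) (y : L) : ⁅z, y⁆ = 0 := by
  obtain ⟨k, hk, p, hp, rfl⟩ := Submodule.mem_sup.mp (hsup ▸ Submodule.mem_top : y ∈ 𝔨 ⊔ 𝔭)
  rw [lie_add, h𝔨 k hk, h𝔭 p hp, add_zero]

end

theorem not_irreducible_of_central_element_general {𝔤 : Type*} [LieRing 𝔤] [LieAlgebra ℂ 𝔤]
    (hcenter : ∀ x : 𝔤, (∀ y : 𝔤, ⁅x, y⁆ = 0) → x = 0)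
    (𝔨 𝔭 : Submodule ℂ 𝔤)
    (hcompl : IsCompl 𝔨 𝔭)
    (h𝔨𝔭 : ∀ x ∈ 𝔨, ∀ p ∈ 𝔭, ⁅x, p⁆ ∈ 𝔭)
    (h𝔭𝔭 : ∀ p ∈ 𝔭, ∀ q ∈ 𝔭, ⁅p, q⁆ ∈ 𝔨)
    (h𝔭𝔭ne : ∃ p ∈ 𝔭, ∃ q ∈ 𝔭, ⁅p, q⁆ ≠ 0)
    (z : 𝔤) (hzne : z ≠ 0)
    (hzc : ∀ k ∈ 𝔨, ⁅z, k⁆ = 0)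
    (heig : 𝔭 = ⨆ μ : ℂ,
      (𝔭 ⊓ LinearMap.ker (LieAlgebra.ad ℂ 𝔤 z - μ • LinearMap.id))) :
    ∃ 𝔞 : Submodule ℂ 𝔤, 𝔞 ≤ 𝔭 ∧ (∀ k ∈ 𝔨, ∀ a ∈ 𝔞, ⁅k, a⁆ ∈ 𝔞) ∧ 𝔞 ≠ ⊥ ∧ 𝔞 ≠ 𝔭 := by
  by_contra! hirr
  obtain ⟨p, hp, q, hq, hpq⟩ := h𝔭𝔭ne
  have h𝔭 : 𝔭 ≠ ⊥ := by
    rintro rfl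
    rw [Submodule.mem_bot] at hp
    simp [hp] at hpq
  obtain ⟨μ, hμ⟩ := exists_eq_of_eq_iSup_of_forall_eq_bot_or_eq heig
    (fun μ => (eq_or_ne _ ⊥).imp_right
      (hirr _ inf_le_left fun _ hk _ => lie_mem_inf_ker_ad_sub_smul h𝔨𝔭 hzc μ hk)) h𝔭
  have hact : ∀ v ∈ 𝔭, ⁅z, v⁆ = μ • v := fun v hv =>
    LieAlgebra.mem_ker_ad_sub_smul_iff.mp (Submodule.mem_inf.mp (hμ.ge hv)).2
  have hμ : μ ≠ 0 := by
    rintro rfl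
    refine hzne (hcenter z (lie_eq_zero_of_sup_eq_top hcompl.sup_eq_top hzc fun v hv => ?_))
    rw [hact v hv, zero_smul]
  have hweight : (μ + μ) • ⁅p, q⁆ = 0 := by
    rw [← lie_lie_eq_add_smul_of_lie_eq_smul (hact p hp) (hact q hq), hzc _ (h𝔭𝔭 p hp q hq)]
  simp [hμ, hpq] at hweight

/-- Let `𝔤` be a finite-dimensional complex Lie algebra with trivial center,
`𝔤 = 𝔨 ⊕ 𝔭` with `𝔨` a subalgebra, `⁅𝔨, 𝔭⁆ ⊆ 𝔭`, `⁅𝔭, 𝔭⁆ ⊆ 𝔨` and `⁅𝔭, 𝔭⁆ ≠ 0`.  If `z ∈ 𝔨`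
is a nonzero central element of `𝔨` and `𝔭` is the sum of the eigenspaces of `ad(z)` that it
contains, then `𝔭` is not an irreducible `𝔨`-module: there is a `𝔨`-stable complex subspace
`𝔞 ⊆ 𝔭` with `𝔞 ≠ 0` and `𝔞 ≠ 𝔭`. -/
theorem not_irreducible_of_central_element {𝔤 : Type*} [LieRing 𝔤] [LieAlgebra ℂ 𝔤]
    [FiniteDimensional ℂ 𝔤]
    (hcenter : ∀ x : 𝔤, (∀ y : 𝔤, ⁅x, y⁆ = 0) → x = 0)
    (𝔨 𝔭 : Submodule ℂ 𝔤)
    (hcompl : IsCompl 𝔨 𝔭)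
    (h𝔨alg : ∀ x ∈ 𝔨, ∀ y ∈ 𝔨, ⁅x, y⁆ ∈ 𝔨)
    (h𝔨𝔭 : ∀ x ∈ 𝔨, ∀ p ∈ 𝔭, ⁅x, p⁆ ∈ 𝔭)
    (h𝔭𝔭 : ∀ p ∈ 𝔭, ∀ q ∈ 𝔭, ⁅p, q⁆ ∈ 𝔨)
    (h𝔭𝔭ne : ∃ p ∈ 𝔭, ∃ q ∈ 𝔭, ⁅p, q⁆ ≠ 0)
    (z : 𝔤) (hz𝔨 : z ∈ 𝔨) (hzne : z ≠ 0)
    (hzc : ∀ k ∈ 𝔨, ⁅z, k⁆ = 0)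
    (heig : 𝔭 = ⨆ μ : ℂ,
      (𝔭 ⊓ LinearMap.ker (LieAlgebra.ad ℂ 𝔤 z - μ • LinearMap.id))) :
    ∃ 𝔞 : Submodule ℂ 𝔤, 𝔞 ≤ 𝔭 ∧ (∀ k ∈ 𝔨, ∀ a ∈ 𝔞, ⁅k, a⁆ ∈ 𝔞) ∧ 𝔞 ≠ ⊥ ∧ 𝔞 ≠ 𝔭 :=
  not_irreducible_of_central_element_general hcenter 𝔨 𝔭 hcompl h𝔨𝔭 h𝔭𝔭 h𝔭𝔭ne z hzne hzc heig
end

section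
/- Let V be a finite-dimensional complex vector space with conjugation σ, let K ⊆ E ⊆ V be complex subspaces with σ(K) = K, and let ε be an alternating ℂ-bilinear form on V with ε(k, x) = 0 for all k ∈ K and x ∈ E. Set L := L(E,ε). Then L ∩ σ̂(L) = K × {0} if and only if both of the following hold: (1) E + σ(E) = V; and (2) for every X ∈ (E ∩ σ(E)) \ K and every ξ ∈ V* with (X, ξ) ∈ L, one has (σ(X), conj ∘ ξ ∘ σ) ∉ L. -/
/-!
Since `σ̂` is an involution, `(x, ξ) ∈ L ∩ σ̂(L)` means `(x, ξ) ∈ L` and `σ̂(x, ξ) ∈ L`. Over a point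
`k ∈ K`, where `ε(k, ·)` and `ε(σk, ·)` vanish on `E`, this says exactly that `ξ` annihilates
`E + σ(E)`. Hence `L ∩ σ̂(L) = K × {0}` splits into two conditions: the first projection of
`L ∩ σ̂(L)` lies in `K`, which is (2), and the annihilator of `E + σ(E)` is zero, which is (1).
-/

variable {V : Type*} [AddCommGroup V] [Module ℂ V]

/-- The conjugate-transported linear functional `conj ∘ ξ ∘ σ`. -/
noncomputable def conjDual (σ : V →ₛₗ[starRingEnd ℂ] V) (ξ : Module.Dual ℂ V) :
    Module.Dual ℂ V where
  toFun v := starRingEnd ℂ (ξ (σ v))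
  map_add' u v := by simp
  map_smul' c v := by simp [LinearMap.map_smulₛₗ]

/-- The extension `σ̂` of a conjugation `σ` on `V` to `V × V*`, `σ̂(x, ξ) = (σx, conj ∘ ξ ∘ σ)`. -/
noncomputable def sigmaHat (σ : V →ₛₗ[starRingEnd ℂ] V) :
    V × Module.Dual ℂ V → V × Module.Dual ℂ V :=
  fun p => (σ p.1, conjDual σ p.2)

/-- The (maximal isotropic) subspace `L(E, ε) ⊆ V × V*` attached to a subspace `E ⊆ V` and a
bilinear form `ε`. -/
def LSet (E : Submodule ℂ V) (ε : V → V → ℂ) : Set (V × Module.Dual ℂ V) :=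
  {p | p.1 ∈ E ∧ ∀ y ∈ E, p.2 y = ε p.1 y}

lemma conjDual_apply (σ : V →ₛₗ[starRingEnd ℂ] V) (ξ : Module.Dual ℂ V) (v : V) :
    conjDual σ ξ v = starRingEnd ℂ (ξ (σ v)) := rfl

lemma Set.eq_prod_zero_iff_of_fibers {α R M : Type*} [Semiring R] [AddCommMonoid M] [Module R M]
    {S : Set (α × M)} {K : Set α} {N : Submodule R M} (hK : K.Nonempty)
    (hfiber : ∀ k ∈ K, ∀ m, (k, m) ∈ S ↔ m ∈ N) :
    S = K ×ˢ {0} ↔ (∀ p ∈ S, p.1 ∈ K) ∧ N = ⊥ := by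
  constructor
  · rintro rfl
    obtain ⟨k, hk⟩ := hK
    refine ⟨fun p hp => hp.1, (Submodule.eq_bot_iff N).2 fun m hm => ?_⟩
    exact ((hfiber k hk m).2 hm).2
  · rintro ⟨hS, rfl⟩
    ext ⟨k, m⟩
    refine ⟨fun hp => ?_, fun ⟨hk, hm⟩ => (hfiber k hk m).2 hm⟩
    have hk : k ∈ K := hS _ hp
    exact ⟨hk, (hfiber k hk m).1 hp⟩

section Conjugation

variable {σ : V →ₛₗ[starRingEnd ℂ] V}

lemma sigmaHat_involutive (hσinv : ∀ v, σ (σ v) = v) : Function.Involutive (sigmaHat σ) := by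
  intro p
  ext v
  · exact hσinv p.1
  · simp [sigmaHat, conjDual_apply, hσinv]

lemma mem_inter_image_sigmaHat_iff (hσinv : ∀ v, σ (σ v) = v) {S : Set (V × Module.Dual ℂ V)}
    {p : V × Module.Dual ℂ V} : p ∈ S ∩ sigmaHat σ '' S ↔ p ∈ S ∧ sigmaHat σ p ∈ S := by
  rw [(sigmaHat_involutive hσinv).image_eq_preimage_symm]
  rfl

lemma sup_map_eq_top_iff (E : Submodule ℂ V) :
    E ⊔ E.map σ = ⊤ ↔ ∀ v : V, ∃ a ∈ E, ∃ b ∈ E, v = a + σ b := by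
  simp only [Submodule.sup_eq_top_iff, Submodule.mem_map, exists_exists_and_eq_and]

lemma mem_dualAnnihilator_sup_map_iff {E : Submodule ℂ V} {ξ : Module.Dual ℂ V} :
    ξ ∈ (E ⊔ E.map σ).dualAnnihilator ↔
      (∀ y ∈ E, ξ y = 0) ∧ ∀ y ∈ E, conjDual σ ξ y = 0 := by
  simp [Submodule.dualAnnihilator_sup_eq, Submodule.mem_dualAnnihilator, conjDual_apply]

end Conjugation

section LSet

variable {E : Submodule ℂ V} {ε : V → V → ℂ}

lemma mem_LSet_iff_of_forall_eq_zero {x : V} (hx : x ∈ E) (hεx : ∀ y ∈ E, ε x y = 0)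
    (ξ : Module.Dual ℂ V) : (x, ξ) ∈ LSet E ε ↔ ∀ y ∈ E, ξ y = 0 := by
  simp +contextual [LSet, hx, hεx]

variable {σ : V →ₛₗ[starRingEnd ℂ] V} {K : Submodule ℂ V}

lemma mem_LSet_inter_image_sigmaHat_iff_of_mem (hσinv : ∀ v, σ (σ v) = v) (hKE : K ≤ E)
    (hεK : ∀ k ∈ K, ∀ x ∈ E, ε k x = 0) {k : V} (hk : k ∈ K) (hσk : σ k ∈ K)
    (ξ : Module.Dual ℂ V) :
    (k, ξ) ∈ LSet E ε ∩ sigmaHat σ '' LSet E ε ↔ ξ ∈ (E ⊔ E.map σ).dualAnnihilator := by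
  rw [mem_inter_image_sigmaHat_iff hσinv, mem_dualAnnihilator_sup_map_iff]
  exact and_congr (mem_LSet_iff_of_forall_eq_zero (hKE hk) (hεK k hk) ξ)
    (mem_LSet_iff_of_forall_eq_zero (hKE hσk) (hεK _ hσk) _)

lemma forall_mem_LSet_inter_image_sigmaHat_fst_mem_iff (hσinv : ∀ v, σ (σ v) = v) :
    (∀ p ∈ LSet E ε ∩ sigmaHat σ '' LSet E ε, p.1 ∈ K) ↔
      ∀ X : V, X ∈ (E : Set V) ∩ σ '' (E : Set V) → X ∉ K →
        ∀ ξ : Module.Dual ℂ V, (X, ξ) ∈ LSet E ε → (σ X, conjDual σ ξ) ∉ LSet E ε := by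
  simp only [mem_inter_image_sigmaHat_iff hσinv]
  constructor
  · intro h X _ hXK ξ hL hσL
    exact hXK (h (X, ξ) ⟨hL, hσL⟩)
  · rintro h ⟨X, ξ⟩ ⟨hL, hσL⟩
    by_contra hXK
    exact h X ⟨hL.1, σ X, hσL.1, hσinv X⟩ hXK ξ hL hσL

end LSet

theorem lInterConjEqK_iff_general
    (σ : V →ₛₗ[starRingEnd ℂ] V) (hσinv : ∀ v, σ (σ v) = v)
    (K E : Submodule ℂ V) (hKE : K ≤ E)
    (hσK : σ '' (K : Set V) = K)
    (ε : V →ₗ[ℂ] V →ₗ[ℂ] ℂ)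
    (hεK : ∀ k ∈ K, ∀ x ∈ E, ε k x = 0) :
    LSet E (fun x y => ε x y) ∩ sigmaHat σ '' LSet E (fun x y => ε x y) =
        (K : Set V) ×ˢ ({0} : Set (Module.Dual ℂ V)) ↔
      ((∀ v : V, ∃ a ∈ E, ∃ b ∈ E, v = a + σ b) ∧
        (∀ X : V, X ∈ (E : Set V) ∩ σ '' (E : Set V) → X ∉ K →
          ∀ ξ : Module.Dual ℂ V, (X, ξ) ∈ LSet E (fun x y => ε x y) →
            (σ X, conjDual σ ξ) ∉ LSet E (fun x y => ε x y))) := by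
  have hσK' : ∀ k ∈ K, σ k ∈ K := fun k hk => hσK.subset ⟨k, hk, rfl⟩
  rw [Set.eq_prod_zero_iff_of_fibers ⟨0, K.zero_mem⟩ fun k hk =>
      mem_LSet_inter_image_sigmaHat_iff_of_mem hσinv hKE hεK hk (hσK' k hk),
    Submodule.dualAnnihilator_eq_bot_iff, sup_map_eq_top_iff, and_comm]
  exact and_congr_right' (forall_mem_LSet_inter_image_sigmaHat_fst_mem_iff hσinv)

/-- `L ∩ σ̂(L) = K × {0}` iff `E + σ(E) = V` and for every
`X ∈ (E ∩ σ(E)) \ K` with `(X, ξ) ∈ L` one has `σ̂(X, ξ) ∉ L`. -/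
theorem lInterConjEqK_iff [FiniteDimensional ℂ V]
    (σ : V →ₛₗ[starRingEnd ℂ] V) (hσinv : ∀ v, σ (σ v) = v)
    (K E : Submodule ℂ V) (hKE : K ≤ E)
    (hσK : σ '' (K : Set V) = K)
    (ε : V →ₗ[ℂ] V →ₗ[ℂ] ℂ) (hεalt : ∀ x, ε x x = 0)
    (hεK : ∀ k ∈ K, ∀ x ∈ E, ε k x = 0) :
    LSet E (fun x y => ε x y) ∩ sigmaHat σ '' LSet E (fun x y => ε x y) =
        (K : Set V) ×ˢ ({0} : Set (Module.Dual ℂ V)) ↔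
      ((∀ v : V, ∃ a ∈ E, ∃ b ∈ E, v = a + σ b) ∧
        (∀ X : V, X ∈ (E : Set V) ∩ σ '' (E : Set V) → X ∉ K →
          ∀ ξ : Module.Dual ℂ V, (X, ξ) ∈ LSet E (fun x y => ε x y) →
            (σ X, conjDual σ ξ) ∉ LSet E (fun x y => ε x y))) :=
  lInterConjEqK_iff_general σ hσinv K E hKE hσK ε hεK
end

section
/- Let V be a finite-dimensional vector space over a field k, K ⊆ V a subspace, π : V → V/K the quotient map, and π* : (V/K)* → V* its transpose. Let L ⊆ V × V* be a subspace such that K × {0} ⊆ L and ξ(v) = 0 for every (x, ξ) ∈ L and v ∈ K. Then π⋆(π⋆L) = L. -/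
variable {k : Type*} [Field k] {V W : Type*} [AddCommGroup V] [Module k V]
  [AddCommGroup W] [Module k W]

/-- The pushforward `π⋆L = {(π x, η) : (x, π* η) ∈ L}` of a subset `L ⊆ V × V*` along a
linear map `π : V → W`. -/
def pushDirac (π : V →ₗ[k] W) (L : Set (V × Module.Dual k V)) :
    Set (W × Module.Dual k W) :=
  {q | ∃ x : V, π x = q.1 ∧ (x, π.dualMap q.2) ∈ L}

/-- The pullback `π⋆D = {(x, π* η) : (π x, η) ∈ D}` of a subset `D ⊆ W × W*` along a linear
map `π : V → W`. -/
def pullDirac (π : V →ₗ[k] W) (D : Set (W × Module.Dual k W)) :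
    Set (V × Module.Dual k V) :=
  {p | ∃ η : Module.Dual k W, p.2 = π.dualMap η ∧ (π p.1, η) ∈ D}

/-- A point `(x, π* η)` of `π⋆(π⋆L)` comes from some `(x', π* η) ∈ L` with `π x' = π x`;
it differs from it by `(x - x', 0)`, which lies in `L` since `x - x' ∈ ker π`. -/
theorem pullDirac_pushDirac_subset (π : V →ₗ[k] W) (L : Submodule k (V × Module.Dual k V))
    (hker : ∀ v ∈ LinearMap.ker π, ((v, 0) : V × Module.Dual k V) ∈ L) :
    pullDirac π (pushDirac π (L : Set (V × Module.Dual k V))) ⊆ L := by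
  rintro ⟨x, _⟩ ⟨η, rfl, x', hx', hmem⟩
  have hdiff : x - x' ∈ LinearMap.ker π := by
    rw [LinearMap.mem_ker, map_sub, sub_eq_zero]
    exact hx'.symm
  simpa using L.add_mem hmem (hker _ hdiff)

/-- Over a field, a covector vanishing on `ker π` is of the form `π* η`. -/
theorem subset_pullDirac_pushDirac (π : V →ₗ[k] W) (L : Set (V × Module.Dual k V))
    (hann : ∀ p ∈ L, ∀ v ∈ LinearMap.ker π, p.2 v = 0) :
    L ⊆ pullDirac π (pushDirac π L) := by
  rintro ⟨x, ξ⟩ hmem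
  have hξ : ξ ∈ LinearMap.range π.dualMap := by
    rw [LinearMap.range_dualMap_eq_dualAnnihilator_ker, Submodule.mem_dualAnnihilator]
    exact hann _ hmem
  obtain ⟨η, rfl⟩ := hξ
  exact ⟨η, rfl, x, rfl, hmem⟩

theorem pull_push_quotient_eq_general
    (K : Submodule k V) (L : Submodule k (V × Module.Dual k V))
    (hKL : (K : Set V) ×ˢ ({0} : Set (Module.Dual k V)) ⊆ (L : Set (V × Module.Dual k V)))
    (hann : ∀ p ∈ L, ∀ v ∈ K, p.2 v = 0) :
    pullDirac K.mkQ (pushDirac K.mkQ (L : Set (V × Module.Dual k V))) =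
      (L : Set (V × Module.Dual k V)) := by
  rw [← K.ker_mkQ] at hKL hann
  exact (pullDirac_pushDirac_subset K.mkQ L fun v hv => hKL ⟨hv, rfl⟩).antisymm
    (subset_pullDirac_pushDirac K.mkQ L hann)

/-- Let `K ⊆ V` be a subspace, `π : V → V/K` the quotient map, and
`L ⊆ V × V*` a subspace with `K × {0} ⊆ L` and `ξ(v) = 0` for every `(x, ξ) ∈ L` and
`v ∈ K`.  Then `π⋆(π⋆ L) = L`. -/
theorem pull_push_quotient_eq [FiniteDimensional k V]
    (K : Submodule k V) (L : Submodule k (V × Module.Dual k V))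
    (hKL : (K : Set V) ×ˢ ({0} : Set (Module.Dual k V)) ⊆ (L : Set (V × Module.Dual k V)))
    (hann : ∀ p ∈ L, ∀ v ∈ K, p.2 v = 0) :
    pullDirac K.mkQ (pushDirac K.mkQ (L : Set (V × Module.Dual k V))) =
      (L : Set (V × Module.Dual k V)) :=
  pull_push_quotient_eq_general K L hKL hann
end
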